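/- Let G = (V,E) be a finite graph with |V| ≥ 1 and let c > 0. For F ⊆ E, let Y(F) be the number of vertices that belong to components of the spanning subgraph (V,F) having at least c|V| vertices, and let C(F) be the number of such components. Then the function Z(F) = Y(F)/(c|V|) − C(F) is monotone increasing: whenever F ⊆ F' ⊆ E, Z(F) ≤ Z(F'). -/
import Mathlib


open Filter Topology
open scoped Classical

noncomputable section

variable {V : Type*}

/-- Probability that the random subgraph `G(p)` lies in the event `A`. -/
noncomputable def percProb [Fintype V] [DecidableEq V] (G : SimpleGraph V) [DecidableRel G.Adj]
    (p : ℝ) (A : Set (Finset (Sym2 V))) : ℝ :=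
  ∑ F ∈ G.edgeFinset.powerset,
    if F ∈ A then p ^ F.card * (1 - p) ^ (G.edgeFinset.card - F.card) else 0

/-- Number of vertices in the component of `v` in the spanning subgraph with edge set `F`. -/
noncomputable def compCard [Fintype V] (F : Finset (Sym2 V)) (v : V) : ℕ :=
  Set.ncard {w | (SimpleGraph.fromEdgeSet (↑F : Set (Sym2 V))).Reachable v w}

/-- The ball of radius `r` around `w`. -/
def ball (G : SimpleGraph V) (w : V) (r : ℕ) : Set V :=
  {v | ∃ q : G.Walk w v, q.length ≤ r}

/-- The ball of radius `r` around a set `A`. -/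
def setBall (G : SimpleGraph V) (A : Set V) (r : ℕ) : Set V :=
  {v | ∃ u ∈ A, ∃ q : G.Walk u v, q.length ≤ r}

/-- `G` is a vertex `b`-expander. -/
def VertexExpander [Fintype V] (G : SimpleGraph V) (b : ℝ) : Prop :=
  ∀ A : Finset V, 0 < A.card → (A.card : ℝ) ≤ Fintype.card V / 2 →
    b * A.card ≤ (Set.ncard {v | v ∉ A ∧ ∃ u ∈ A, G.Adj u v} : ℝ)

/-- The set of edges of `G` with exactly one endpoint in `A`. -/
def edgeBoundary (G : SimpleGraph V) (A : Set V) : Set (Sym2 V) :=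
  {e | e ∈ G.edgeSet ∧ ∃ u v : V, e = s(u, v) ∧ u ∈ A ∧ v ∉ A}

/-- `G` is an edge `b`-expander. -/
def EdgeExpander [Fintype V] (G : SimpleGraph V) (b : ℝ) : Prop :=
  ∀ A : Finset V, 0 < A.card → (A.card : ℝ) ≤ Fintype.card V / 2 →
    b * A.card ≤ ((edgeBoundary G ↑A).ncard : ℝ)

/-- `e` is an `L`-bridge for configuration `F` (largeness threshold `c * |V|`). -/
def IsLBridge [Fintype V] (G : SimpleGraph V) (c : ℝ) (F : Finset (Sym2 V)) (e : Sym2 V) : Prop :=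
  e ∈ G.edgeSet ∧ ∃ u v : V, e = s(u, v) ∧
    ¬ (SimpleGraph.fromEdgeSet (↑(F.erase e) : Set (Sym2 V))).Reachable u v ∧
    c * Fintype.card V ≤ (compCard (F.erase e) u : ℝ) ∧
    c * Fintype.card V ≤ (compCard (F.erase e) v : ℝ)

/-- `F` has more than one component with at least `s` vertices. -/
def TwoLargeComponents [Fintype V] (F : Finset (Sym2 V)) (s : ℝ) : Prop :=
  ∃ v w : V, ¬ (SimpleGraph.fromEdgeSet (↑F : Set (Sym2 V))).Reachable v w ∧
    s ≤ (compCard F v : ℝ) ∧ s ≤ (compCard F w : ℝ)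

/-- The edge-isoperimetric number (Cheeger constant) of `G`. -/
noncomputable def isoNumber [Fintype V] (G : SimpleGraph V) : ℝ :=
  sInf {x : ℝ | ∃ A : Finset V, 0 < A.card ∧ (A.card : ℝ) ≤ Fintype.card V / 2 ∧
    x = ((edgeBoundary G ↑A).ncard : ℝ) / A.card}


/-- The number of vertices in components of size at least `c * |V|`. -/
noncomputable def Yfun [Fintype V] (c : ℝ) (F : Finset (Sym2 V)) : ℕ :=
  Set.ncard {v : V | c * Fintype.card V ≤ (compCard F v : ℝ)}

/-- The number of components of size at least `c * |V|`. -/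
noncomputable def Cfun [Fintype V] (c : ℝ) (F : Finset (Sym2 V)) : ℕ :=
  Nat.card {K : (SimpleGraph.fromEdgeSet (↑F : Set (Sym2 V))).ConnectedComponent //
    c * Fintype.card V ≤ (K.supp.ncard : ℝ)}



private lemma compCard_eq_supp_ncard {V : Type} [Fintype V] (F : Finset (Sym2 V)) (v : V) :
    compCard F v =
      (((SimpleGraph.fromEdgeSet (↑F : Set (Sym2 V))).connectedComponentMk v).supp).ncard := by
  unfold compCard
  congr 1
  ext w
  simp only [SimpleGraph.ConnectedComponent.mem_supp_iff, SimpleGraph.ConnectedComponent.eq,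
    Set.mem_setOf_eq]
  exact ⟨SimpleGraph.Reachable.symm, SimpleGraph.Reachable.symm⟩

private lemma compCard_mono {V : Type} [Fintype V] {F F' : Finset (Sym2 V)} (h : F ⊆ F')
    (v : V) : compCard F v ≤ compCard F' v := by
  apply Set.ncard_le_ncard _ (Set.toFinite _)
  intro w hw
  exact hw.mono (SimpleGraph.fromEdgeSet_mono (by exact_mod_cast h))

private lemma Yfun_eq_sum {V : Type} [Fintype V] [DecidableEq V] (c : ℝ) (F : Finset (Sym2 V)) :
    (Yfun c F : ℝ) = ∑ v : V,
      (if c * Fintype.card V ≤ (compCard F v : ℝ) then (1 : ℝ) else 0) := by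
  rw [Finset.sum_boole]
  unfold Yfun
  congr 1
  rw [← Set.ncard_coe_finset]
  congr 1
  ext v
  simp

private lemma sum_inv_eq_C {V : Type} [Fintype V] [DecidableEq V] {c : ℝ}
    (hs : 0 < c * (Fintype.card V : ℝ)) (F : Finset (Sym2 V)) :
    ∑ v : V, (if c * Fintype.card V ≤ (compCard F v : ℝ)
        then ((compCard F v : ℝ))⁻¹ else 0) = (Cfun c F : ℝ) := by
  classical
  set H := SimpleGraph.fromEdgeSet (↑F : Set (Sym2 V)) with hH
  haveI : Fintype H.ConnectedComponent := Fintype.ofFinite _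
  have hsupp : ∀ K : H.ConnectedComponent,
      K.supp.ncard = (Finset.univ.filter (fun v => H.connectedComponentMk v = K)).card := by
    intro K
    rw [← Set.ncard_coe_finset]
    congr 1
    ext v
    simp [SimpleGraph.ConnectedComponent.mem_supp_iff]
  rw [← Finset.sum_fiberwise_of_maps_to (g := fun v => H.connectedComponentMk v)
      (t := Finset.univ) (fun v _ => Finset.mem_univ _)]
  have hinner : ∀ K : H.ConnectedComponent,
      (∑ v ∈ Finset.univ.filter (fun v => H.connectedComponentMk v = K),
        (if c * Fintype.card V ≤ (compCard F v : ℝ) then ((compCard F v : ℝ))⁻¹ else 0))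
      = (if c * Fintype.card V ≤ (K.supp.ncard : ℝ) then (1 : ℝ) else 0) := by
    intro K
    have hv : ∀ v ∈ Finset.univ.filter (fun v => H.connectedComponentMk v = K),
        compCard F v = K.supp.ncard := by
      intro v hv
      rw [Finset.mem_filter] at hv
      rw [compCard_eq_supp_ncard, ← hH, hv.2]
    rw [Finset.sum_congr rfl (fun v hv' => by rw [hv v hv'])]
    rw [Finset.sum_const, ← hsupp K, nsmul_eq_mul]
    by_cases hK : c * Fintype.card V ≤ (K.supp.ncard : ℝ)
    · simp only [hK, if_true]
      exact mul_inv_cancel₀ (ne_of_gt (lt_of_lt_of_le hs hK))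
    · simp [hK]
  rw [Finset.sum_congr rfl (fun K _ => hinner K), Finset.sum_boole]
  congr 1
  unfold Cfun
  rw [← hH]
  have : Nat.card {K : H.ConnectedComponent // c * Fintype.card V ≤ (K.supp.ncard : ℝ)}
      = Set.ncard {K : H.ConnectedComponent | c * Fintype.card V ≤ (K.supp.ncard : ℝ)} :=
    Nat.card_coe_set_eq _
  rw [this, ← Set.ncard_coe_finset]
  congr 1
  ext K
  simp

private lemma Z_eq_sum {V : Type} [Fintype V] [DecidableEq V] {c : ℝ}
    (hs : 0 < c * (Fintype.card V : ℝ)) (F : Finset (Sym2 V)) :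
    (Yfun c F : ℝ) / (c * Fintype.card V) - (Cfun c F : ℝ)
      = ∑ v : V, (if c * Fintype.card V ≤ (compCard F v : ℝ)
          then (c * Fintype.card V)⁻¹ - ((compCard F v : ℝ))⁻¹ else 0) := by
  classical
  rw [div_eq_mul_inv, Yfun_eq_sum, ← sum_inv_eq_C hs F, Finset.sum_mul, ← Finset.sum_sub_distrib]
  apply Finset.sum_congr rfl
  intro v _
  by_cases h : c * Fintype.card V ≤ (compCard F v : ℝ) <;> simp [h]

theorem Z_is_monotone
    (V : Type) [Fintype V] [DecidableEq V] (hV : 1 ≤ Fintype.card V)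
    (G : SimpleGraph V) [DecidableRel G.Adj] (c : ℝ) (hc : 0 < c)
    (F F' : Finset (Sym2 V)) (hFF' : F ⊆ F') (hF' : F' ⊆ G.edgeFinset) :
    (Yfun c F : ℝ) / (c * Fintype.card V) - (Cfun c F : ℝ)
      ≤ (Yfun c F' : ℝ) / (c * Fintype.card V) - (Cfun c F' : ℝ) := by
  classical
  have hn : (0 : ℝ) < (Fintype.card V : ℝ) := by
    exact_mod_cast Nat.lt_of_lt_of_le Nat.zero_lt_one hV
  have hs : 0 < c * (Fintype.card V : ℝ) := mul_pos hc hn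
  rw [Z_eq_sum hs F, Z_eq_sum hs F']
  apply Finset.sum_le_sum
  intro v _
  have hmono : (compCard F v : ℝ) ≤ (compCard F' v : ℝ) := by
    exact_mod_cast compCard_mono hFF' v
  by_cases h : c * Fintype.card V ≤ (compCard F v : ℝ)
  · have h' : c * Fintype.card V ≤ (compCard F' v : ℝ) := le_trans h hmono
    simp only [h, h', if_true]
    have hpos : (0 : ℝ) < (compCard F v : ℝ) := lt_of_lt_of_le hs h
    exact sub_le_sub_left (inv_anti₀ hpos hmono) _
  · simp only [h, if_false]
    by_cases h' : c * Fintype.card V ≤ (compCard F' v : ℝ)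
    · simp only [h', if_true]
      have : ((compCard F' v : ℝ))⁻¹ ≤ (c * Fintype.card V)⁻¹ :=
        inv_anti₀ hs h'
      linarith
    · simp [h']



end
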